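/- Let n ≥ 1 and let f : ℝⁿ → ℝ be a C² function with ‖∇f(x)‖ = 1 for all x ∈ ℝⁿ. Then for every x ∈ ℝⁿ and every c in the range of f, the distance from x to the level set f⁻¹(c) equals |f(x) − c|. In particular, any two nonempty level sets f⁻¹(s) and f⁻¹(t) are equidistant: the infimum of ‖p − q‖ over p ∈ f⁻¹(s), q ∈ f⁻¹(t) equals |s − t|, and every point of f⁻¹(s) is at distance exactly |s − t| from f⁻¹(t). -/

import Mathlib

open Set Metric InnerProductSpace
open scoped RealInnerProductSpace

/-!
Differentiating `‖∇f‖² = 1` and using the symmetry of the Hessian gives `D∇f (∇f) = 0`. Hence, by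
Grönwall, `∇f` is constant along the line `s ↦ x + s • ∇f x`, and `f` grows at unit speed along it:
this line reaches the level `c` at distance `|f x - c|`. Since `f` is `1`-Lipschitz, no point of
that level set is closer.
-/

section Gronwall

variable {E : Type*} [NormedAddCommGroup E] [NormedSpace ℝ E] {ψ ψ' : ℝ → E} {B : ℝ → ℝ}

theorem eq_zero_of_norm_deriv_le_mul_norm_of_nonneg (hB : Continuous B)
    (hψ : ∀ t, HasDerivAt ψ (ψ' t) t) (bound : ∀ t, ‖ψ' t‖ ≤ B t * ‖ψ t‖) (h0 : ψ 0 = 0)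
    {t : ℝ} (ht : 0 ≤ t) : ψ t = 0 := by
  obtain ⟨K, hK⟩ := isCompact_Icc.exists_bound_of_continuousOn (hB.continuousOn (s := Icc 0 t))
  refine eq_zero_of_abs_deriv_le_mul_abs_self_of_eq_zero_right (K := K)
    (fun s _ => (hψ s).continuousAt.continuousWithinAt) (fun s _ => (hψ s).hasDerivWithinAt) h0
    (fun s hs => (bound s).trans ?_) t ⟨ht, le_rfl⟩
  gcongr
  exact (Real.le_norm_self _).trans (hK s (Ico_subset_Icc_self hs))

theorem eq_zero_of_norm_deriv_le_mul_norm (hB : Continuous B)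
    (hψ : ∀ t, HasDerivAt ψ (ψ' t) t) (bound : ∀ t, ‖ψ' t‖ ≤ B t * ‖ψ t‖) (h0 : ψ 0 = 0)
    (t : ℝ) : ψ t = 0 := by
  rcases le_total 0 t with ht | ht
  · exact eq_zero_of_norm_deriv_le_mul_norm_of_nonneg hB hψ bound h0 ht
  · have hψneg (s : ℝ) : HasDerivAt (fun s => ψ (-s)) (-ψ' (-s)) s := by
      simpa [Function.comp_def] using (hψ (-s)).scomp s (hasDerivAt_neg s)
    simpa using eq_zero_of_norm_deriv_le_mul_norm_of_nonneg (hB.comp continuous_neg) hψneg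
      (fun s => by simpa using bound (-s)) (by simpa using h0) (neg_nonneg.mpr ht)

end Gronwall

section Gradient

variable {F : Type*} [NormedAddCommGroup F] [InnerProductSpace ℝ F] [CompleteSpace F]
  {f : F → ℝ}

theorem ContDiff.gradient {m n : WithTop ℕ∞} (hf : ContDiff ℝ n f) (hmn : m + 1 ≤ n) :
    ContDiff ℝ m (gradient f) :=
  (toDual ℝ F).symm.contDiff.comp (hf.fderiv_right hmn)

theorem lipschitzWith_of_nnnorm_gradient_le {C : NNReal} (hf : Differentiable ℝ f)
    (bound : ∀ x, ‖gradient f x‖₊ ≤ C) : LipschitzWith C f :=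
  lipschitzWith_of_nnnorm_fderiv_le hf fun x => by
    simpa only [gradient, LinearIsometryEquiv.nnnorm_map] using bound x

theorem inner_fderiv_gradient_apply {y : F} (hf : DifferentiableAt ℝ (fderiv ℝ f) y) (w u : F) :
    ⟪fderiv ℝ (gradient f) y w, u⟫ = fderiv ℝ (fderiv ℝ f) y w u := by
  have h := ((toDual ℝ F).symm.toContinuousLinearEquiv.comp_hasFDerivAt_iff.mpr
    hf.hasFDerivAt).fderiv
  rw [show gradient f = ⇑(toDual ℝ F).symm.toContinuousLinearEquiv ∘ fderiv ℝ f from rfl, h]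
  exact toDual_symm_apply

theorem inner_fderiv_gradient_comm {y : F} (hf : ContDiffAt ℝ 2 f y) (w u : F) :
    ⟪fderiv ℝ (gradient f) y w, u⟫ = ⟪fderiv ℝ (gradient f) y u, w⟫ := by
  have hdiff : DifferentiableAt ℝ (fderiv ℝ f) y :=
    (hf.fderiv_right (m := 1) le_rfl).differentiableAt one_ne_zero
  rw [inner_fderiv_gradient_apply hdiff, inner_fderiv_gradient_apply hdiff]
  exact hf.isSymmSndFDerivAt (by simp) w u

theorem inner_fderiv_gradient_gradient_eq_zero {c : ℝ} {y : F}
    (hf : DifferentiableAt ℝ (gradient f) y) (hnorm : ∀ x, ‖gradient f x‖ = c) (w : F) :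
    ⟪fderiv ℝ (gradient f) y w, gradient f y⟫ = 0 := by
  have hconst : (fun x => ‖gradient f x‖ ^ 2) = fun _ => c ^ 2 := by simp [hnorm]
  have h := hf.hasFDerivAt.norm_sq
  rw [hconst] at h
  have := congrArg (· w) ((hasFDerivAt_const _ _).unique h)
  simp only [zero_apply, smul_apply, ContinuousLinearMap.comp_apply, innerSL_apply_apply,
    nsmul_eq_mul, Nat.cast_ofNat] at this
  rw [real_inner_comm]
  linarith

theorem fderiv_gradient_apply_gradient_eq_zero {c : ℝ} (hf : ContDiff ℝ 2 f)
    (hnorm : ∀ x, ‖gradient f x‖ = c) (y : F) :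
    fderiv ℝ (gradient f) y (gradient f y) = 0 := by
  have hG : DifferentiableAt ℝ (gradient f) y :=
    (hf.gradient (m := 1) le_rfl).differentiable one_ne_zero y
  rw [← inner_self_eq_zero (𝕜 := ℝ), inner_fderiv_gradient_comm hf.contDiffAt]
  exact inner_fderiv_gradient_gradient_eq_zero hG hnorm _

theorem gradient_add_smul_gradient {c : ℝ} (hf : ContDiff ℝ 2 f)
    (hnorm : ∀ x, ‖gradient f x‖ = c) (x : F) (t : ℝ) :
    gradient f (x + t • gradient f x) = gradient f x := by
  set v := gradient f x
  have hG : ContDiff ℝ 1 (gradient f) := hf.gradient le_rfl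
  have hline (s : ℝ) : HasDerivAt (fun r : ℝ => x + r • v) v s := by
    simpa using ((hasDerivAt_id s).smul_const v).const_add x
  have hdefect (s : ℝ) : HasDerivAt (fun r => gradient f (x + r • v) - v)
      (fderiv ℝ (gradient f) (x + s • v) v) s :=
    (((hG.differentiable one_ne_zero _).hasFDerivAt).comp_hasDerivAt s (hline s)).sub_const v
  have hbound (s : ℝ) : ‖fderiv ℝ (gradient f) (x + s • v) v‖ ≤
      ‖fderiv ℝ (gradient f) (x + s • v)‖ * ‖gradient f (x + s • v) - v‖ := by
    -- `D∇f` kills `∇f`, so the defect `∇f - v` solves a linear equation along the line.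
    have hkill : fderiv ℝ (gradient f) (x + s • v) v =
        -fderiv ℝ (gradient f) (x + s • v) (gradient f (x + s • v) - v) := by
      rw [map_sub, fderiv_gradient_apply_gradient_eq_zero hf hnorm, zero_sub, neg_neg]
    rw [hkill, norm_neg]
    exact ContinuousLinearMap.le_opNorm _ _
  have hcont : Continuous fun s : ℝ => ‖fderiv ℝ (gradient f) (x + s • v)‖ :=
    ((hG.continuous_fderiv one_ne_zero).comp (by fun_prop)).norm
  exact sub_eq_zero.mp (eq_zero_of_norm_deriv_le_mul_norm hcont hdefect hbound (by simp [v]) t)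

theorem eikonal_add_smul_gradient (hf : ContDiff ℝ 2 f) (heik : ∀ x, ‖gradient f x‖ = 1)
    (x : F) (t : ℝ) : f (x + t • gradient f x) = f x + t := by
  set v := gradient f x
  have hderiv (s : ℝ) : HasDerivAt (fun r : ℝ => f (x + r • v) - r) 0 s := by
    have hline : HasDerivAt (fun r : ℝ => x + r • v) v s := by
      simpa using ((hasDerivAt_id s).smul_const v).const_add x
    have hf' := ((hf.differentiable two_ne_zero _).hasFDerivAt).comp_hasDerivAt s hline
    rw [← inner_gradient_left, gradient_add_smul_gradient hf heik, real_inner_self_eq_norm_sq,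
      heik, one_pow] at hf'
    simpa [Function.comp_def, Pi.sub_def] using hf'.sub (hasDerivAt_id s)
  have := is_const_of_deriv_eq_zero (fun s => (hderiv s).differentiableAt)
    (fun s => (hderiv s).deriv) t 0
  simp only [zero_smul, add_zero, sub_zero] at this
  linarith

theorem exists_mem_preimage_dist_eq_abs_sub_of_eikonal (hf : ContDiff ℝ 2 f)
    (heik : ∀ x, ‖gradient f x‖ = 1) (x : F) (c : ℝ) :
    ∃ y ∈ f ⁻¹' {c}, dist x y = |f x - c| := by
  refine ⟨x + (c - f x) • gradient f x, ?_, ?_⟩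
  · rw [mem_preimage, eikonal_add_smul_gradient hf heik, mem_singleton_iff]
    ring
  · rw [dist_self_add_right, norm_smul, heik, mul_one, Real.norm_eq_abs, abs_sub_comm]

theorem lipschitzWith_one_of_eikonal (hf : ContDiff ℝ 2 f) (heik : ∀ x, ‖gradient f x‖ = 1) :
    LipschitzWith 1 f :=
  lipschitzWith_of_nnnorm_gradient_le (hf.differentiable two_ne_zero) fun x => by
    rw [← NNReal.coe_le_coe, coe_nnnorm, heik, NNReal.coe_one]

theorem infDist_preimage_singleton_of_eikonal (hf : ContDiff ℝ 2 f)
    (heik : ∀ x, ‖gradient f x‖ = 1) (x : F) (c : ℝ) :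
    infDist x (f ⁻¹' {c}) = |f x - c| := by
  obtain ⟨y, hy, hxy⟩ := exists_mem_preimage_dist_eq_abs_sub_of_eikonal hf heik x c
  refine le_antisymm ((infDist_le_dist_of_mem hy).trans_eq hxy) ((le_infDist ⟨y, hy⟩).2 ?_)
  rintro z (rfl : f z = c)
  simpa [Real.dist_eq] using (lipschitzWith_one_of_eikonal hf heik).dist_le_mul x z

end Gradient

theorem eikonal_level_sets_equidistant_general {n : ℕ}
    (f : EuclideanSpace ℝ (Fin n) → ℝ) (hf : ContDiff ℝ 2 f)
    (heik : ∀ x : EuclideanSpace ℝ (Fin n), ‖gradient f x‖ = 1) :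
    (∀ (x : EuclideanSpace ℝ (Fin n)), ∀ c ∈ Set.range f,
      Metric.infDist x (f ⁻¹' {c}) = |f x - c|) ∧
    (∀ s ∈ Set.range f, ∀ t ∈ Set.range f,
      sInf {r : ℝ | ∃ p ∈ f ⁻¹' {s}, ∃ q ∈ f ⁻¹' {t}, r = ‖p - q‖} = |s - t| ∧
      ∀ p ∈ f ⁻¹' {s}, Metric.infDist p (f ⁻¹' {t}) = |s - t|) := by
  have hdist := infDist_preimage_singleton_of_eikonal hf heik
  refine ⟨fun x c _ => hdist x c, fun s ⟨p₀, hp₀⟩ t _ => ⟨?_, fun p hp => by rw [hdist, hp]⟩⟩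
  obtain ⟨q₀, hq₀, hpq₀⟩ := exists_mem_preimage_dist_eq_abs_sub_of_eikonal hf heik p₀ t
  refine IsLeast.csInf_eq ⟨⟨p₀, hp₀, q₀, hq₀, ?_⟩, ?_⟩
  · rw [← dist_eq_norm, hpq₀, hp₀]
  · rintro r ⟨p, rfl : f p = s, q, rfl : f q = t, rfl⟩
    simpa [Real.dist_eq, dist_eq_norm] using (lipschitzWith_one_of_eikonal hf heik).dist_le_mul p q

/-- For a C² unit eikonal function `f : ℝⁿ → ℝ` (`‖∇f‖ ≡ 1`), the distance from any point
`x` to a nonempty level set `f⁻¹(c)` equals `|f(x) − c|`; consequently any two nonempty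
level sets `f⁻¹(s)` and `f⁻¹(t)` are equidistant: the infimum of the distances between
their points is `|s − t|`, and every point of `f⁻¹(s)` is at distance exactly `|s − t|`
from `f⁻¹(t)`. -/
theorem eikonal_level_sets_equidistant {n : ℕ} (hn : 1 ≤ n)
    (f : EuclideanSpace ℝ (Fin n) → ℝ) (hf : ContDiff ℝ 2 f)
    (heik : ∀ x : EuclideanSpace ℝ (Fin n), ‖gradient f x‖ = 1) :
    (∀ (x : EuclideanSpace ℝ (Fin n)), ∀ c ∈ Set.range f,
      Metric.infDist x (f ⁻¹' {c}) = |f x - c|) ∧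
    (∀ s ∈ Set.range f, ∀ t ∈ Set.range f,
      sInf {r : ℝ | ∃ p ∈ f ⁻¹' {s}, ∃ q ∈ f ⁻¹' {t}, r = ‖p - q‖} = |s - t| ∧
      ∀ p ∈ f ⁻¹' {s}, Metric.infDist p (f ⁻¹' {t}) = |s - t|) :=
  eikonal_level_sets_equidistant_general f hf heik
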